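/- arXiv:2601.21227 — 4 statements merged into one kernel-verified Lean document; each statement's English description precedes it below -/
import Mathlib

section
/- Let θ, k : ℝ → ℝ satisfy θ' = k, and define T(s) = (-sin θ(s), cos θ(s)), N(s) = (-cos θ(s), -sin θ(s)), and F(s) = (1/2)k(s)² • T(s) + k'(s) • N(s). Then F'(s) = (k''(s) + (1/2)k(s)³) • N(s). -/
/-!
The pair `(T, N)` is a rotating orthonormal frame with angular speed `θ' = k`, so
`T' = k • N` and `N' = -k • T`. Differentiating `F = a • T + b • N` with `a = k²/2`, `b = k'`
gives the `T`-component `a' - k b = k k' - k k' = 0` and the `N`-component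
`b' + k a = k'' + k³/2`.
-/

open Real

theorem HasDerivAt.smul_add_smul_of_rotating_frame {E : Type*} [NormedAddCommGroup E]
    [NormedSpace ℝ E] {T N : ℝ → E} {a b : ℝ → ℝ} {a' b' κ s : ℝ}
    (hT : HasDerivAt T (κ • N s) s) (hN : HasDerivAt N (-κ • T s) s)
    (ha : HasDerivAt a a' s) (hb : HasDerivAt b b' s) :
    HasDerivAt (fun t => a t • T t + b t • N t)
      ((a' - κ * b s) • T s + (b' + κ * a s) • N s) s := by
  refine ((ha.smul hT).add (hb.smul hN)).congr_deriv ?_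
  module

theorem hasDerivAt_tangent_comp {θ : ℝ → ℝ} {κ s : ℝ} (hθ : HasDerivAt θ κ s) :
    HasDerivAt (fun t => ((-sin (θ t), cos (θ t)) : ℝ × ℝ))
      (κ • ((-cos (θ s), -sin (θ s)) : ℝ × ℝ)) s := by
  refine (hθ.sin.neg.prodMk hθ.cos).congr_deriv ?_
  ext <;> simp [mul_comm]

theorem hasDerivAt_normal_comp {θ : ℝ → ℝ} {κ s : ℝ} (hθ : HasDerivAt θ κ s) :
    HasDerivAt (fun t => ((-cos (θ t), -sin (θ t)) : ℝ × ℝ))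
      (-κ • ((-sin (θ s), cos (θ s)) : ℝ × ℝ)) s := by
  refine (hθ.cos.neg.prodMk hθ.sin.neg).congr_deriv ?_
  ext <;> simp [mul_comm]

/-- Derivative of the force vector `F = (1/2)k² • T + k' • N` along a curve with
tangent angle `θ`, `θ' = k`: `F' = (k'' + (1/2)k³) • N`. -/
theorem force_derivative
    (θ k k' k'' : ℝ → ℝ)
    (hθ : ∀ s, HasDerivAt θ (k s) s)
    (hk : ∀ s, HasDerivAt k (k' s) s)
    (hk' : ∀ s, HasDerivAt k' (k'' s) s)
    (T N F : ℝ → ℝ × ℝ)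
    (hT : ∀ s, T s = (-Real.sin (θ s), Real.cos (θ s)))
    (hN : ∀ s, N s = (-Real.cos (θ s), -Real.sin (θ s)))
    (hF : ∀ s, F s = ((1/2) * (k s)^2) • T s + (k' s) • N s) :
    ∀ s, HasDerivAt F ((k'' s + (1/2) * (k s)^3) • N s) s := by
  intro s
  have hT' : HasDerivAt T (k s • N s) s := by
    rw [funext hT, hN]; exact hasDerivAt_tangent_comp (hθ s)
  have hN' : HasDerivAt N (-k s • T s) s := by
    rw [funext hN, hT]; exact hasDerivAt_normal_comp (hθ s)
  have ha : HasDerivAt (fun t => (1/2) * (k t)^2) (k s * k' s) s := by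
    refine (((hk s).pow 2).const_mul (1/2)).congr_deriv ?_
    norm_num
    ring
  rw [funext hF]
  refine (hT'.smul_add_smul_of_rotating_frame hN' ha (hk' s)).congr_deriv ?_
  rw [mul_comm, sub_self, zero_smul, zero_add]
  congr 1
  ring
end

section
/- Suppose k : ℝ → ℝ solves k'' + (1/2)k³ = 0 with k(0) = 1, k'(0) = 0, and θ : ℝ → ℝ solves θ' = k with θ(0) = 0. Then for all s, cos(θ(s)) = k(s)² and sin(θ(s)) = -2 k'(s). -/
/-! With `u = cos θ - k²` and `v = sin θ + 2k'`, the equations `θ' = k` and `k'' = -k³/2` give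
`u' = -k v` and `v' = k u`: the vector `(u, v)` rotates with angular speed `k`, so `u² + v²` is
constant, and it vanishes at `0`. -/

section Rotation

variable {a u v : ℝ → ℝ}

theorem sq_add_sq_eq_of_hasDerivAt_rotation (hu : ∀ s, HasDerivAt u (-(a s) * v s) s)
    (hv : ∀ s, HasDerivAt v (a s * u s) s) (s t : ℝ) :
    u s ^ 2 + v s ^ 2 = u t ^ 2 + v t ^ 2 := by
  have hderiv : ∀ x, HasDerivAt (fun x => u x ^ 2 + v x ^ 2) 0 x := fun x => by
    refine ((hu x).fun_pow 2).fun_add ((hv x).fun_pow 2) |>.congr_deriv ?_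
    ring
  exact is_const_of_deriv_eq_zero (fun x => (hderiv x).differentiableAt)
    (fun x => (hderiv x).deriv) s t

theorem eq_zero_of_hasDerivAt_rotation (hu : ∀ s, HasDerivAt u (-(a s) * v s) s)
    (hv : ∀ s, HasDerivAt v (a s * u s) s) {t : ℝ} (hut : u t = 0) (hvt : v t = 0) (s : ℝ) :
    u s = 0 ∧ v s = 0 := by
  have hsum : u s ^ 2 + v s ^ 2 = 0 := by
    rw [sq_add_sq_eq_of_hasDerivAt_rotation hu hv s t, hut, hvt]
    norm_num
  obtain ⟨hus, hvs⟩ := (add_eq_zero_iff_of_nonneg (sq_nonneg _) (sq_nonneg _)).mp hsum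
  exact ⟨pow_eq_zero_iff two_ne_zero |>.mp hus, pow_eq_zero_iff two_ne_zero |>.mp hvs⟩

end Rotation

/-- For the rectangular elastica base arc: `cos θ = k²` and `sin θ = -2k'`. -/
theorem elastica_angle_identities
    (θ k k' k'' : ℝ → ℝ)
    (hk : ∀ s, HasDerivAt k (k' s) s)
    (hk' : ∀ s, HasDerivAt k' (k'' s) s)
    (hode : ∀ s, k'' s + (1/2) * (k s)^3 = 0)
    (hk0 : k 0 = 1) (hk'0 : k' 0 = 0)
    (hθ : ∀ s, HasDerivAt θ (k s) s) (hθ0 : θ 0 = 0) :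
    ∀ s, Real.cos (θ s) = (k s)^2 ∧ Real.sin (θ s) = -2 * k' s := by
  set u : ℝ → ℝ := fun s => Real.cos (θ s) - k s ^ 2
  set v : ℝ → ℝ := fun s => Real.sin (θ s) + 2 * k' s
  have hu : ∀ s, HasDerivAt u (-(k s) * v s) s := fun s => by
    refine (hθ s).cos.fun_sub ((hk s).fun_pow 2) |>.congr_deriv ?_
    simp only [v]
    ring
  have hv : ∀ s, HasDerivAt v (k s * u s) s := fun s => by
    refine (hθ s).sin.add ((hk' s).const_mul 2) |>.congr_deriv ?_
    simp only [u]
    linear_combination (2 : ℝ) * hode s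
  intro s
  obtain ⟨hus, hvs⟩ := eq_zero_of_hasDerivAt_rotation hu hv (t := 0)
    (by simp [u, hθ0, hk0]) (by simp [v, hθ0, hk'0]) s
  exact ⟨sub_eq_zero.mp hus, by linear_combination hvs⟩
end

section
/- Let k solve k'' + (1/2)k³ = 0 with k(0) = 1, k'(0) = 0. Then there exists a finite L₀ > 0 such that k(L₀) = -1, k is strictly decreasing on [0, L₀], and L₀ ≤ 2 ∫_{-1}^{1} dκ/√(1 - κ⁴). -/
/-!
Multiplying the equation by `k'` shows that the energy `k'² + k⁴/4 = 1/4` is conserved, so on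
any interval where `k' < 0` the speed is `|k'| = √(1 - k⁴) / 2`. Changing variables to `κ = k s`
there bounds the length of every such interval starting at `0` by `2 ∫_{-1}^{1} dκ/√(1-κ⁴)`.
Since `k''(0) = -1/2`, `k'` is negative just after `0`, so the supremum `L₀` of these intervals
is positive and finite, and `k'(L₀) = 0`. Energy then gives `k(L₀)⁴ = 1`, and `k(L₀) < k 0 = 1`
forces `k(L₀) = -1`.
-/

open Set Filter Topology MeasureTheory

theorem HasDerivAt.eventually_nhdsGT_lt {f : ℝ → ℝ} {f' x : ℝ} (hf : HasDerivAt f f' x)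
    (hf' : f' < 0) : ∀ᶠ y in 𝓝[>] x, f y < f x := by
  filter_upwards [hf.hasDerivWithinAt.limsup_slope_le' (lt_irrefl x) hf', self_mem_nhdsWithin]
    with y hslope hxy
  rw [slope_def_field, div_neg_iff] at hslope
  rcases hslope with ⟨-, h⟩ | ⟨h, -⟩
  · linarith [mem_Ioi.1 hxy]
  · linarith

theorem exists_first_zero_of_eventually_neg {f : ℝ → ℝ} (hf : Continuous f) {a : ℝ}
    (hstart : ∀ᶠ x in 𝓝[>] a, f x < 0) (hbdd : BddAbove {t | ∀ x ∈ Ioo a t, f x < 0}) :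
    ∃ L, a < L ∧ f L = 0 ∧ ∀ x ∈ Ioo a L, f x < 0 := by
  set A := {t | ∀ x ∈ Ioo a t, f x < 0}
  obtain ⟨u, hau, hu⟩ := mem_nhdsGT_iff_exists_Ioo_subset.1 hstart
  have huA : u ∈ A := hu
  have haL : a < sSup A := hau.trans_le (le_csSup hbdd huA)
  have hneg : ∀ x ∈ Ioo a (sSup A), f x < 0 := fun x hx => by
    obtain ⟨t, htA, hxt⟩ := exists_lt_of_lt_csSup ⟨u, huA⟩ hx.2
    exact htA x ⟨hx.1, hxt⟩
  refine ⟨sSup A, haL, le_antisymm ?_ ?_, hneg⟩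
  · refine le_of_tendsto (hf.continuousWithinAt (s := Iio (sSup A))) ?_
    filter_upwards [Ioo_mem_nhdsLT haL] with x hx using (hneg x hx).le
  · by_contra! hL
    obtain ⟨v, hLv, hv⟩ := mem_nhdsGT_iff_exists_Ioo_subset.1
      ((hf.continuousWithinAt (s := Ioi (sSup A))).eventually (gt_mem_nhds hL))
    have hvA : v ∈ A := fun x ⟨hax, hxv⟩ => by
      rcases lt_trichotomy x (sSup A) with hx | rfl | hx
      · exact hneg x ⟨hax, hx⟩
      · exact hL
      · exact hv ⟨hx, hxv⟩
    exact (le_csSup hbdd hvA).not_gt hLv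

theorem integrableOn_one_div_sqrt_one_sub_pow_four :
    IntegrableOn (fun κ : ℝ => 1 / √(1 - κ ^ 4)) (Icc (-1) 1) := by
  rw [integrableOn_Icc_iff_integrableOn_Ioc, ← intervalIntegrable_iff_integrableOn_Ioc_of_le
    (by norm_num)]
  refine Polynomial.Chebyshev.intervalIntegrable_sqrt_one_sub_sq_inv.mono_fun
    (Measurable.aestronglyMeasurable (by fun_prop)) ?_
  rw [uIoc_of_le (by norm_num)]
  filter_upwards [ae_restrict_mem measurableSet_Ioc] with x ⟨hx₁, hx₂⟩
  rw [Real.norm_of_nonneg (by positivity), Real.norm_of_nonneg (by positivity), Real.sqrt_inv,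
    ← one_div]
  rcases hx₂.eq_or_lt with rfl | hx₂
  · simp
  have hx : x ^ 2 < 1 := by nlinarith
  exact one_div_le_one_div_of_le (Real.sqrt_pos.2 (by linarith))
    (Real.sqrt_le_sqrt (by nlinarith))

theorem sub_le_two_mul_integral_of_sq_deriv_eq {k k' : ℝ → ℝ} {a b : ℝ}
    (hk : ∀ x ∈ Ioo a b, HasDerivAt k (k' x) x) (hinj : InjOn k (Ioo a b))
    (hsq : ∀ x ∈ Ioo a b, k' x ^ 2 = (1 - k x ^ 4) / 4) (hne : ∀ x ∈ Ioo a b, k' x ≠ 0) :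
    b - a ≤ 2 * ∫ κ in (-1:ℝ)..1, 1 / √(1 - κ ^ 4) := by
  set G : ℝ → ℝ := fun κ => 1 / √(1 - κ ^ 4)
  have hspeed : ∀ x ∈ Ioo a b, |k' x| * G (k x) = 1 / 2 := fun x hx => by
    have : √(1 - k x ^ 4) = 2 * |k' x| := by
      rw [show 1 - k x ^ 4 = (2 * |k' x|) ^ 2 by rw [mul_pow, sq_abs, hsq x hx]; ring]
      exact Real.sqrt_sq (by positivity)
    simp only [G, this]
    field_simp [hne x hx]
  have himage : k '' Ioo a b ⊆ Icc (-1) 1 := by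
    rintro _ ⟨x, hx, rfl⟩
    have : |k x| ^ 4 ≤ 1 := by
      rw [(by decide : Even 4).pow_abs]
      nlinarith [hsq x hx, sq_nonneg (k' x)]
    exact abs_le.1 ((pow_le_one_iff_of_nonneg (abs_nonneg _) (by norm_num)).1 this)
  calc b - a ≤ 2 * ∫ x in Ioo a b, |k' x| * G (k x) := by
        rw [setIntegral_congr_fun measurableSet_Ioo hspeed]
        simp only [integral_const, measureReal_restrict_apply_univ, Real.volume_real_Ioo,
          smul_eq_mul]
        linarith [le_max_left (b - a) 0]
    _ = 2 * ∫ κ in k '' Ioo a b, G κ := by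
        rw [integral_image_eq_integral_abs_deriv_smul measurableSet_Ioo
          (fun x hx => (hk x hx).hasDerivWithinAt) hinj]
        rfl
    _ ≤ 2 * ∫ κ in Icc (-1) 1, G κ := by
        gcongr 2 * ?_
        exact setIntegral_mono_set integrableOn_one_div_sqrt_one_sub_pow_four
          (Eventually.of_forall fun κ => by positivity) (Eventually.of_forall himage)
    _ = 2 * ∫ κ in (-1:ℝ)..1, G κ := by
        rw [intervalIntegral.integral_of_le (by norm_num), integral_Icc_eq_integral_Ioc]

theorem elastica_energy_eq {k k' k'' : ℝ → ℝ} (hk : ∀ s, HasDerivAt k (k' s) s)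
    (hk' : ∀ s, HasDerivAt k' (k'' s) s) (hode : ∀ s, k'' s + (1/2) * (k s)^3 = 0) (s t : ℝ) :
    k' s ^ 2 + k s ^ 4 / 4 = k' t ^ 2 + k t ^ 4 / 4 := by
  have hE : ∀ s, HasDerivAt (fun s => k' s ^ 2 + k s ^ 4 / 4) 0 s := fun s => by
    refine (((hk' s).pow 2).add (((hk s).pow 4).div_const 4)).congr_deriv ?_
    push_cast
    linear_combination (2 * k' s) * hode s
  exact is_const_of_deriv_eq_zero (fun x => (hE x).differentiableAt) (fun x => (hE x).deriv) s t

/-- The elastica curvature reaches `-1` in finite time `L₀`, is strictly decreasing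
on `[0, L₀]`, and `L₀ ≤ 2∫_{-1}^{1} dκ/√(1-κ⁴)`. -/
theorem elastica_reaches_minus_one
    (k k' k'' : ℝ → ℝ)
    (hk : ∀ s, HasDerivAt k (k' s) s)
    (hk' : ∀ s, HasDerivAt k' (k'' s) s)
    (hode : ∀ s, k'' s + (1/2) * (k s)^3 = 0)
    (hk0 : k 0 = 1) (hk'0 : k' 0 = 0) :
    ∃ L₀ : ℝ, 0 < L₀ ∧ k L₀ = -1 ∧ StrictAntiOn k (Set.Icc 0 L₀) ∧
      L₀ ≤ 2 * ∫ κ in (-1:ℝ)..1, 1 / Real.sqrt (1 - κ^4) := by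
  have hsq : ∀ s, k' s ^ 2 = (1 - k s ^ 4) / 4 := fun s => by
    have := elastica_energy_eq hk hk' hode s 0
    rw [hk0, hk'0] at this
    linarith
  have hkc : Continuous k := Differentiable.continuous fun s => (hk s).differentiableAt
  have hk'c : Continuous k' := Differentiable.continuous fun s => (hk' s).differentiableAt
  have hanti : ∀ t, (∀ x ∈ Ioo 0 t, k' x < 0) → StrictAntiOn k (Icc 0 t) := fun t hneg =>
    strictAntiOn_of_hasDerivWithinAt_neg (convex_Icc 0 t) hkc.continuousOn
      (fun x _ => (hk x).hasDerivWithinAt) (by simpa using hneg)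
  have hbound : ∀ t, (∀ x ∈ Ioo 0 t, k' x < 0) → t ≤ 2 * ∫ κ in (-1:ℝ)..1, 1 / √(1 - κ ^ 4) :=
    fun t hneg => by
      simpa using sub_le_two_mul_integral_of_sq_deriv_eq (fun x _ => hk x)
        ((hanti t hneg).injOn.mono Ioo_subset_Icc_self) (fun x _ => hsq x)
        (fun x hx => (hneg x hx).ne)
  have hstart : ∀ᶠ x in 𝓝[>] 0, k' x < 0 := by
    simpa [hk'0] using (hk' 0).eventually_nhdsGT_lt (by linarith [hk0 ▸ hode 0])
  obtain ⟨L₀, hL₀, hzero, hneg⟩ := exists_first_zero_of_eventually_neg hk'c hstart ⟨_, hbound⟩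
  have hkL₀ : k L₀ = -1 := by
    have hlt : k L₀ < 1 := hk0 ▸ hanti L₀ hneg (left_mem_Icc.2 hL₀.le) (right_mem_Icc.2 hL₀.le) hL₀
    have h4 : k L₀ ^ 4 = 1 := by linarith [hzero ▸ hsq L₀]
    obtain ⟨h, -⟩ : k L₀ = -1 ∧ Even 4 := by simpa [hlt.ne] using pow_eq_one_iff_cases.1 h4
    exact h
  exact ⟨L₀, hL₀, hkL₀, hanti L₀ hneg, hbound L₀ hneg⟩
end

section
/- Let k solve k'' + (1/2)k³ = 0 with k(0)=1, k'(0)=0, let θ solve θ' = k with θ(0)=0, and let L₀ be the first time k reaches -1. Then k'(L₀) = 0 and θ(L₀) = 0. -/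
open Set

/-!
The energy `k'² / 2 + k⁴ / 8` is conserved, and `k(L₀) = -1 = -k(0)` forces `k'(L₀) = 0`.
Since the nonlinearity is odd, `s ↦ -k(L₀ - s)` solves the same equation with the same initial
data, so by uniqueness `k(L₀ - s) = -k(s)`. Hence `s ↦ θ(L₀ - s) - θ(s)` has derivative zero, and
comparing its values at `0` and `L₀` gives `θ(L₀) = θ(0) = 0`.
-/

theorem LocallyLipschitz.eq_of_hasDerivAt_of_eq {E : Type*} [NormedAddCommGroup E]
    [NormedSpace ℝ E] {F : E → E} (hF : LocallyLipschitz F) {f g : ℝ → E}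
    (hf : ∀ t, HasDerivAt f (F (f t)) t) (hg : ∀ t, HasDerivAt g (F (g t)) t)
    {t₀ : ℝ} (heq : f t₀ = g t₀) : f = g := by
  funext t
  obtain ⟨a, b, ht, ht₀⟩ : ∃ a b : ℝ, t ∈ Ioo a b ∧ t₀ ∈ Ioo a b :=
    ⟨min t t₀ - 1, max t t₀ + 1,
      ⟨by linarith [min_le_left t t₀], by linarith [le_max_left t t₀]⟩,
      ⟨by linarith [min_le_right t t₀], by linarith [le_max_right t t₀]⟩⟩
  -- Both trajectories over `[a, b]` stay in a compact set, on which `F` is Lipschitz.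
  set K := f '' Icc a b ∪ g '' Icc a b
  have hK : IsCompact K :=
    (isCompact_Icc.image (continuous_iff_continuousAt.2 fun t ↦ (hf t).continuousAt)).union
      (isCompact_Icc.image (continuous_iff_continuousAt.2 fun t ↦ (hg t).continuousAt))
  obtain ⟨L, hL⟩ := hF.locallyLipschitzOn.exists_lipschitzOnWith_of_compact hK
  exact ODE_solution_unique_of_mem_Ioo (v := fun _ ↦ F) (s := fun _ ↦ K) (fun _ _ ↦ hL) ht₀
    (fun s hs ↦ ⟨hf s, .inl ⟨s, Ioo_subset_Icc_self hs, rfl⟩⟩)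
    (fun s hs ↦ ⟨hg s, .inr ⟨s, Ioo_subset_Icc_self hs, rfl⟩⟩) heq ht

theorem energy_eq_of_hasDerivAt {V V' k k' k'' : ℝ → ℝ} (hV : ∀ x, HasDerivAt V (V' x) x)
    (hk : ∀ s, HasDerivAt k (k' s) s) (hk' : ∀ s, HasDerivAt k' (k'' s) s)
    (hode : ∀ s, k'' s = -V' (k s)) (s t : ℝ) :
    k' s ^ 2 / 2 + V (k s) = k' t ^ 2 / 2 + V (k t) := by
  have hE : ∀ s, HasDerivAt (fun s ↦ k' s ^ 2 / 2 + V (k s)) 0 s := fun s ↦ by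
    refine ((((hk' s).fun_pow 2).div_const 2).add ((hV (k s)).comp s (hk s))).congr_deriv ?_
    rw [hode]
    push_cast
    ring
  exact is_const_of_deriv_eq_zero (fun s ↦ (hE s).differentiableAt) (fun s ↦ (hE s).deriv) s t

/-- The elastica equation `k'' = -k³ / 2` as a first-order system for `(k, k')`. -/
noncomputable def elasticaField (p : ℝ × ℝ) : ℝ × ℝ := (p.2, -(1 / 2) * p.1 ^ 3)

theorem locallyLipschitz_elasticaField : LocallyLipschitz elasticaField :=
  ContDiff.locallyLipschitz (𝕂 := ℝ) (by unfold elasticaField; fun_prop)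

section Elastica

variable {k k' k'' : ℝ → ℝ} (hk : ∀ s, HasDerivAt k (k' s) s)
  (hk' : ∀ s, HasDerivAt k' (k'' s) s) (hode : ∀ s, k'' s + (1 / 2) * k s ^ 3 = 0)
include hk hk' hode

theorem hasDerivAt_elasticaField (s : ℝ) :
    HasDerivAt (fun s ↦ (k s, k' s)) (elasticaField (k s, k' s)) s := by
  have hfield : elasticaField (k s, k' s) = (k' s, k'' s) := by
    simp only [elasticaField, Prod.mk.injEq, true_and]
    linarith [hode s]
  exact hfield ▸ (hk s).prodMk (hk' s)

theorem hasDerivAt_elasticaField_reflect (L s : ℝ) :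
    HasDerivAt (fun s ↦ (-k (L - s), k' (L - s))) (elasticaField (-k (L - s), k' (L - s))) s := by
  have hfield : elasticaField (-k (L - s), k' (L - s)) = (- -k' (L - s), -k'' (L - s)) := by
    simp only [elasticaField, neg_neg, Prod.mk.injEq, true_and]
    linarith [hode (L - s)]
  exact hfield ▸ ((hk (L - s)).comp_const_sub L s).neg.prodMk ((hk' (L - s)).comp_const_sub L s)

theorem elastica_reflect_eq_neg {L : ℝ} (hkL : k L = -k 0) (hk'L : k' L = k' 0) (s : ℝ) :
    k (L - s) = -k s := by
  have h := locallyLipschitz_elasticaField.eq_of_hasDerivAt_of_eq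
    (hasDerivAt_elasticaField_reflect hk hk' hode L) (hasDerivAt_elasticaField hk hk' hode)
    (t₀ := 0) (by simp [hkL, hk'L])
  have := congrArg (fun f ↦ (f s).1) h
  simp only at this
  linarith

end Elastica

theorem eq_of_hasDerivAt_of_reflect_eq_neg {θ k : ℝ → ℝ} {L : ℝ}
    (hθ : ∀ s, HasDerivAt θ (k s) s) (hsymm : ∀ s, k (L - s) = -k s) : θ L = θ 0 := by
  have hD : ∀ s, HasDerivAt (fun s ↦ θ (L - s) - θ s) 0 s := fun s ↦ by
    have := ((hθ (L - s)).comp_const_sub L s).sub (hθ s)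
    rwa [hsymm, neg_neg, sub_self] at this
  have := is_const_of_deriv_eq_zero (fun s ↦ (hD s).differentiableAt) (fun s ↦ (hD s).deriv) L 0
  simp only [sub_self, sub_zero] at this
  linarith

theorem elastica_halfperiod_endpoint_general
    (θ k k' k'' : ℝ → ℝ)
    (hk : ∀ s, HasDerivAt k (k' s) s)
    (hk' : ∀ s, HasDerivAt k' (k'' s) s)
    (hode : ∀ s, k'' s + (1/2) * (k s)^3 = 0)
    (hk0 : k 0 = 1) (hk'0 : k' 0 = 0)
    (hθ : ∀ s, HasDerivAt θ (k s) s) (hθ0 : θ 0 = 0)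
    (L₀ : ℝ) (hkL₀ : k L₀ = -1) :
    k' L₀ = 0 ∧ θ L₀ = 0 := by
  have henergy := energy_eq_of_hasDerivAt (V := fun x ↦ x ^ 4 / 8) (V' := fun x ↦ x ^ 3 / 2)
    (fun x ↦ ((hasDerivAt_pow 4 x).div_const 8).congr_deriv (by push_cast; ring)) hk hk'
    (fun s ↦ by linarith [hode s]) L₀ 0
  rw [hkL₀, hk0, hk'0] at henergy
  have hk'L₀ : k' L₀ = 0 := pow_eq_zero_iff two_ne_zero |>.mp (by linarith)
  have hsymm := elastica_reflect_eq_neg hk hk' hode (L := L₀) (by rw [hkL₀, hk0])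
    (by rw [hk'L₀, hk'0])
  exact ⟨hk'L₀, hθ0 ▸ eq_of_hasDerivAt_of_reflect_eq_neg hθ hsymm⟩

/-- At the first time `L₀` the elastica curvature `k` reaches `-1`, one has
`k'(L₀) = 0` and `θ(L₀) = 0`. -/
theorem elastica_halfperiod_endpoint
    (θ k k' k'' : ℝ → ℝ)
    (hk : ∀ s, HasDerivAt k (k' s) s)
    (hk' : ∀ s, HasDerivAt k' (k'' s) s)
    (hode : ∀ s, k'' s + (1/2) * (k s)^3 = 0)
    (hk0 : k 0 = 1) (hk'0 : k' 0 = 0)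
    (hθ : ∀ s, HasDerivAt θ (k s) s) (hθ0 : θ 0 = 0)
    (L₀ : ℝ) (hL₀pos : 0 < L₀) (hkL₀ : k L₀ = -1)
    (hfirst : ∀ s, 0 < s → s < L₀ → k s ≠ -1) :
    k' L₀ = 0 ∧ θ L₀ = 0 :=
  elastica_halfperiod_endpoint_general θ k k' k'' hk hk' hode hk0 hk'0 hθ hθ0 L₀ hkL₀
end
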